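/- arXiv:1303.5366 — 3 statements merged into one kernel-verified Lean document; each statement's English description precedes it below -/
import Mathlib

section
/- (Shirshov's factorization theorem) Every nonempty word w over a linearly ordered alphabet can be written uniquely as a product w = c₁c₂⋯cₙ where each cᵢ is a Lyndon word (ALSW) and c₁ ⪯ c₂ ⪯ ⋯ ⪯ cₙ in the lexicographic ordering. -/
/-!
The key fact is that an ALSW is greater than each of its proper suffixes; conversely, a
nonempty word with this property is an ALSW. From it, if `c ≻ d` are ALSWs then so is `c d`.

Existence: prepend the letters of `w` one at a time, each as a one-letter factor, and merge the
new first factor with its successor for as long as it is greater than it.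

Uniqueness: the first factor `c` of a sorted factorization is the longest ALSW prefix. An ALSW
prefix `q = c r` with `r ≠ []` ends in a nonempty prefix `s` of some later factor, so
`c ≻ q ≻ s ⪰ c`.
-/

/-- The lexicographic ordering on words with the convention that a proper prefix is
greater than the word extending it (`u ≻ uv` for `v ≠ 1`): `gtLex u v` means `u ≻ v`. -/
def gtLex {X : Type*} [LinearOrder X] : List X → List X → Prop
  | [], [] => False
  | [], _ :: _ => True
  | _ :: _, [] => False
  | a :: u, b :: v => b < a ∨ (a = b ∧ gtLex u v)

/-- `w` is an associative Lyndon–Shirshov word: `w` is nonempty and `w ≻ v ++ u` for every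
factorization `w = u ++ v` into nonempty words. -/
def IsALSW {X : Type*} [LinearOrder X] (w : List X) : Prop :=
  w ≠ [] ∧ ∀ u v : List X, u ≠ [] → v ≠ [] → w = u ++ v → gtLex w (v ++ u)

theorem List.not_append_prefix_self {α : Type*} {u v : List α} (hu : u ≠ []) : ¬ u ++ v <+: v :=
  fun h => by
    have := h.length_le
    rw [List.length_append] at this
    exact hu (List.length_eq_zero_iff.mp (by omega))

section
variable {X : Type*} [LinearOrder X]

local infix:50 " ≻ " => gtLex

theorem gtLex_iff_lex : ∀ {u v : List X}, u ≻ v ↔ List.Lex (· > ·) u v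
  | [], [] | [], _ :: _ | _ :: _, [] => by simp [gtLex]
  | a :: u, b :: v => by rw [gtLex, List.cons_lex_cons_iff, gtLex_iff_lex]

theorem gtLex_irrefl (u : List X) : ¬ u ≻ u := by
  rw [gtLex_iff_lex]
  exact List.lex_irrefl (r := (· > ·)) (fun x => lt_irrefl x) u

theorem gtLex_trans {u v w : List X} (huv : u ≻ v) (hvw : v ≻ w) : u ≻ w := by
  rw [gtLex_iff_lex] at *
  exact List.lex_trans (fun hxy hyz => hyz.trans hxy) huv hvw

theorem gtLex_trichotomy (u v : List X) : u ≻ v ∨ u = v ∨ v ≻ u := by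
  simp only [gtLex_iff_lex]
  exact trichotomous_of _ u v

theorem gtLex_append_right {t : List X} (u : List X) (ht : t ≠ []) : u ≻ u ++ t := by
  rw [gtLex_iff_lex]
  simpa using List.Lex.append_left _ ((List.lex_nil_or_eq_nil t).resolve_right ht) u

theorem gtLex_append_left_iff (u : List X) {s t : List X} : u ++ s ≻ u ++ t ↔ s ≻ t := by
  induction u with
  | nil => rfl
  | cons a u ih => simp [gtLex, ih]

theorem gtLex_append_of_not_prefix :
    ∀ {u v : List X}, u ≻ v → ¬ u <+: v → ∀ s t, u ++ s ≻ v ++ t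
  | [], _, _, hp => absurd (List.nil_prefix) hp
  | _ :: _, [], h, _ => by simp [gtLex] at h
  | a :: u, b :: v, h, hp => by
    intro s t
    rcases h with h | ⟨rfl, h⟩
    · exact Or.inl h
    · exact Or.inr ⟨rfl, gtLex_append_of_not_prefix h (by simpa using hp) s t⟩

theorem gtLex_append_of_gtLex {u v s : List X} (hs : u ≻ s) (hv : ∀ m, s = u ++ m → v ≻ m) :
    u ++ v ≻ s := by
  by_cases hp : u <+: s
  · obtain ⟨m, rfl⟩ := hp
    exact (gtLex_append_left_iff u).mpr (hv m rfl)
  · simpa using gtLex_append_of_not_prefix hs hp v []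

theorem IsALSW.gtLex_of_eq_append {w u v : List X} (hw : IsALSW w) (hu : u ≠ []) (hv : v ≠ [])
    (huv : w = u ++ v) : w ≻ v := by
  have hrot : w ≻ v ++ u := hw.2 u v hu hv huv
  rcases gtLex_trichotomy w v with h | rfl | h
  · exact h
  · exact (hu (List.self_eq_append_left.mp huv)).elim
  · exfalso
    by_cases hvw : v <+: w
    · -- `w = v ++ t`, and the rotation `t ++ v` of `w` would exceed `w`
      obtain ⟨t, hvt⟩ := hvw
      have ht : t ≠ [] := by
        rintro rfl
        rw [List.append_nil] at hvt
        exact hu (List.self_eq_append_left.mp (hvt ▸ huv))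
      have htu : t ≻ u := (gtLex_append_left_iff v).mp (hvt ▸ hrot)
      have hlen : t.length = u.length := by
        have := congrArg List.length (hvt.trans huv)
        simp only [List.length_append] at this
        omega
      have hnp : ¬ t <+: u := fun hp => gtLex_irrefl t (hp.eq_of_length hlen ▸ htu)
      have hgt := gtLex_append_of_not_prefix htu hnp v v
      rw [← huv] at hgt
      exact gtLex_irrefl w (gtLex_trans (hw.2 v t hv ht hvt.symm) hgt)
    · exact gtLex_irrefl w (gtLex_trans hrot (by simpa using gtLex_append_of_not_prefix h hvw u []))

theorem isALSW_iff_gtLex_suffix {w : List X} :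
    IsALSW w ↔ w ≠ [] ∧ ∀ u v : List X, u ≠ [] → v ≠ [] → w = u ++ v → w ≻ v := by
  refine ⟨fun hw => ⟨hw.1, fun u v => hw.gtLex_of_eq_append⟩, fun ⟨hw, h⟩ => ⟨hw, ?_⟩⟩
  intro u v hu hv huv
  have hnp : ¬ w <+: v := huv ▸ List.not_append_prefix_self hu
  simpa using gtLex_append_of_not_prefix (h u v hu hv huv) hnp [] u

theorem isALSW_singleton (x : X) : IsALSW [x] := by
  refine ⟨List.cons_ne_nil x [], fun u v hu hv h => ?_⟩
  have := congrArg List.length h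
  simp only [List.length_singleton, List.length_append] at this
  have := List.length_pos_iff.mpr hu
  have := List.length_pos_iff.mpr hv
  omega

theorem IsALSW.append {u v : List X} (hu : IsALSW u) (hv : IsALSW v) (huv : u ≻ v) :
    IsALSW (u ++ v) := by
  have gtLex_suffix_of_v : ∀ k s, s ≠ [] → v = k ++ s → u ++ v ≻ s := by
    intro k s hs hks
    have hus : u ≻ s := by
      rcases eq_or_ne k [] with rfl | hk
      · simpa [hks] using huv
      · exact gtLex_trans huv (hv.gtLex_of_eq_append hk hs hks)
    refine gtLex_append_of_gtLex hus fun m hm => hv.gtLex_of_eq_append (u := k ++ u) ?_ ?_ ?_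
    · simp [hu.1]
    · rintro rfl
      exact gtLex_irrefl u (by simpa [hm] using hus)
    · rw [hks, hm, List.append_assoc]
  refine isALSW_iff_gtLex_suffix.mpr ⟨by simp [hu.1], fun a b ha hb hab => ?_⟩
  rcases List.append_eq_append_iff.mp hab.symm with ⟨k, hak, hkb⟩ | ⟨k, hak, hkb⟩
  · rcases eq_or_ne k [] with rfl | hk
    · exact gtLex_suffix_of_v [] b hb (by simpa using hkb.symm)
    · rw [hkb]
      exact gtLex_append_of_not_prefix (hu.gtLex_of_eq_append ha hk hak)
        (hak ▸ List.not_append_prefix_self ha) v v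
  · exact gtLex_suffix_of_v k b hb hkb

def LexLE (u v : List X) : Prop := u = v ∨ v ≻ u

theorem LexLE.trans {u v w : List X} (huv : LexLE u v) (hvw : LexLE v w) : LexLE u w := by
  rcases huv with rfl | huv
  · exact hvw
  rcases hvw with rfl | hvw
  · exact Or.inr huv
  · exact Or.inr (gtLex_trans hvw huv)

instance : Trans (LexLE (X := X)) LexLE LexLE := ⟨LexLE.trans⟩

theorem List.IsPrefix.lexLE {r c : List X} (h : r <+: c) : LexLE c r := by
  obtain ⟨t, rfl⟩ := h
  rcases eq_or_ne t [] with rfl | ht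
  · exact Or.inl (List.append_nil r)
  · exact Or.inr (gtLex_append_right r ht)

def IsShirshovFactorization (cs : List (List X)) : Prop :=
  (∀ c ∈ cs, IsALSW c) ∧ cs.IsChain LexLE

theorem IsShirshovFactorization.nil : IsShirshovFactorization ([] : List (List X)) :=
  ⟨by simp, List.isChain_nil⟩

theorem IsShirshovFactorization.of_cons {c : List X} {cs : List (List X)}
    (h : IsShirshovFactorization (c :: cs)) : IsShirshovFactorization cs :=
  ⟨fun d hd => h.1 d (List.mem_cons_of_mem c hd), h.2.tail⟩

theorem exists_shirshovFactorization_append {c : List X} (hc : IsALSW c) {ds : List (List X)}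
    (hds : IsShirshovFactorization ds) :
    ∃ es, es.flatten = c ++ ds.flatten ∧ IsShirshovFactorization es := by
  induction ds generalizing c with
  | nil => exact ⟨[c], by simp, by simpa [IsShirshovFactorization] using hc⟩
  | cons d ds ih =>
    by_cases hcd : c ≻ d
    · obtain ⟨es, hes, hfact⟩ := ih (hc.append (hds.1 d (by simp)) hcd) hds.of_cons
      exact ⟨es, by simp [hes], hfact⟩
    · refine ⟨c :: d :: ds, rfl, List.forall_mem_cons.mpr ⟨hc, hds.1⟩, ?_⟩
      exact List.isChain_cons_cons.mpr ⟨(gtLex_trichotomy c d).resolve_left hcd, hds.2⟩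

theorem exists_shirshovFactorization (w : List X) :
    ∃ cs, cs.flatten = w ∧ IsShirshovFactorization cs := by
  induction w with
  | nil => exact ⟨[], rfl, .nil⟩
  | cons x w ih =>
    obtain ⟨cs, rfl, hcs⟩ := ih
    exact exists_shirshovFactorization_append (isALSW_singleton x) hcs

theorem exists_suffix_lexLE_of_prefix_flatten {b r : List X} {cs : List (List X)}
    (hcs : ∀ c ∈ cs, LexLE b c) (hr : r ≠ []) (hrcs : r <+: cs.flatten) :
    ∃ s, s ≠ [] ∧ s <:+ r ∧ LexLE b s := by
  induction cs generalizing r with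
  | nil => exact (hr (List.prefix_nil.mp hrcs)).elim
  | cons c cs ih =>
    rw [List.flatten_cons] at hrcs
    by_cases hrc : r <+: c
    · exact ⟨r, hr, List.suffix_refl r, (hcs c (by simp)).trans hrc.lexLE⟩
    obtain ⟨r', rfl⟩ :=
      (List.prefix_or_prefix_of_prefix hrcs (List.prefix_append c _)).resolve_left hrc
    have hr' : r' ≠ [] := by
      rintro rfl
      exact hrc (by simp)
    obtain ⟨s, hs, hsr, hbs⟩ := ih (fun d hd => hcs d (by simp [hd])) hr'
      ((List.prefix_append_right_inj c).mp hrcs)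
    exact ⟨s, hs, hsr.trans (List.suffix_append c r'), hbs⟩

theorem IsShirshovFactorization.length_le_head {c : List X} {cs : List (List X)}
    (h : IsShirshovFactorization (c :: cs)) {q : List X} (hq : IsALSW q)
    (hqc : q <+: (c :: cs).flatten) : q.length ≤ c.length := by
  by_contra! hlt
  rw [List.flatten_cons] at hqc
  obtain ⟨r, rfl⟩ := List.prefix_of_prefix_length_le (List.prefix_append c _) hqc hlt.le
  have hr : r ≠ [] := by
    rintro rfl
    simp at hlt
  obtain ⟨s, hs, ⟨k, rfl⟩, hcs⟩ := exists_suffix_lexLE_of_prefix_flatten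
    (fun d hd => h.2.rel_cons hd) hr ((List.prefix_append_right_inj c).mp hqc)
  -- `c ≻ c ++ k ++ s ≻ s ⪰ c`
  have hcq : c ≻ c ++ (k ++ s) := gtLex_append_right c hr
  have hqs : c ++ (k ++ s) ≻ s :=
    hq.gtLex_of_eq_append (u := c ++ k) (by simp [(h.1 c (by simp)).1]) hs (by simp)
  rcases hcs with rfl | hsc
  · exact gtLex_irrefl _ (gtLex_trans hcq hqs)
  · exact gtLex_irrefl _ (gtLex_trans (gtLex_trans hcq hqs) hsc)

theorem IsShirshovFactorization.eq_of_flatten_eq {cs ds : List (List X)}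
    (hcs : IsShirshovFactorization cs) (hds : IsShirshovFactorization ds)
    (h : cs.flatten = ds.flatten) : cs = ds := by
  induction cs generalizing ds with
  | nil =>
    cases ds with
    | nil => rfl
    | cons d ds => exact ((hds.1 d (by simp)).1 (List.append_eq_nil_iff.mp h.symm).1).elim
  | cons c cs ih =>
    cases ds with
    | nil => exact ((hcs.1 c (by simp)).1 (List.append_eq_nil_iff.mp h).1).elim
    | cons d ds =>
      have hdc := hcs.length_le_head (hds.1 d (by simp)) (h ▸ List.prefix_append d _)
      have hcd := hds.length_le_head (hcs.1 c (by simp)) (h ▸ List.prefix_append c _)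
      obtain ⟨rfl, htail⟩ := List.append_inj h (le_antisymm hcd hdc)
      rw [ih hcs.of_cons hds.of_cons htail]

end

theorem shirshov_factorization_general {X : Type*} [LinearOrder X] (w : List X) :
    ∃! cs : List (List X), cs.flatten = w ∧ (∀ c ∈ cs, IsALSW c) ∧
      cs.Chain' (fun c d => c = d ∨ gtLex d c) := by
  obtain ⟨cs, hflat, hcs⟩ := exists_shirshovFactorization w
  exact ⟨cs, ⟨hflat, hcs⟩, fun ds ⟨hds_flat, hds⟩ =>
    IsShirshovFactorization.eq_of_flatten_eq hds hcs (hds_flat.trans hflat.symm)⟩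

/-- Shirshov's factorization theorem: every nonempty word factors uniquely as a
lexicographically nondecreasing product of Lyndon words (ALSWs). -/
theorem shirshov_factorization {X : Type*} [LinearOrder X] (w : List X) (hw : w ≠ []) :
    ∃! cs : List (List X), cs.flatten = w ∧ (∀ c ∈ cs, IsALSW c) ∧
      cs.Chain' (fun c d => c = d ∨ gtLex d c) :=
  shirshov_factorization_general w
end

section
/- Let k⟨X⟩ be the free associative algebra over a field k on a set X with a monomial well-ordering on X*, and let S ⊂ k⟨X⟩ be a set of monic polynomials such that every element f of the two-sided ideal Id(S) has leading word of the form a·s̄·b for some s ∈ S and a, b ∈ X*. Then the set Irr(S) of words u ∈ X* containing no s̄ (s ∈ S) as a factor is a k-linear basis of the quotient algebra k⟨X⟩/Id(S). -/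
/-!
The words of `Irr(S)` span a complement of `Id(S)` in `k⟨X⟩`. The sum is everything by well-founded induction on words:
a reducible word `u = a s̄ b` is congruent modulo `Id(S)` to `a s b - u`, in which only words
smaller than `u` occur because `s` is monic and the order is monomial. The sum is direct because
a nonzero element of `Id(S)` spanned by irreducible words would have an irreducible leading word.
-/

/-- The monomial `u ∈ X*` viewed in the free associative algebra `k⟨X⟩`. -/
noncomputable def mono (k : Type*) [Field k] {X : Type*} (u : FreeMonoid X) :
    MonoidAlgebra k (FreeMonoid X) := MonoidAlgebra.of k (FreeMonoid X) u

/-- The leading (maximal) word of a nonzero polynomial. -/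
noncomputable def lw {k X : Type*} [Field k] [LinearOrder (FreeMonoid X)]
    (f : MonoidAlgebra k (FreeMonoid X)) (hf : f ≠ 0) : FreeMonoid X :=
  f.coeff.support.max' (Finsupp.support_nonempty_iff.mpr (MonoidAlgebra.coeff_eq_zero.not.mpr hf))

/-- The two-sided ideal generated by `S`, described as the `k`-span of all `S`-words
`a·s·b` with `a, b ∈ X*`, `s ∈ S`. -/
noncomputable def idSpan {k X : Type*} [Field k]
    (S : Set (MonoidAlgebra k (FreeMonoid X))) :
    Submodule k (MonoidAlgebra k (FreeMonoid X)) :=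
  Submodule.span k {x | ∃ (a b : FreeMonoid X) (s : MonoidAlgebra k (FreeMonoid X)),
    s ∈ S ∧ x = mono k a * s * mono k b}

/-- `Irr S`: the words containing no leading word of an element of `S` as a factor. -/
def Irr {k X : Type*} [Field k] [LinearOrder (FreeMonoid X)]
    (S : Set (MonoidAlgebra k (FreeMonoid X))) : Set (FreeMonoid X) :=
  {u | ¬ ∃ (a b : FreeMonoid X) (s : MonoidAlgebra k (FreeMonoid X))
    (_ : s ∈ S) (h0 : s ≠ 0), u = a * lw s h0 * b}

open MonoidAlgebra

section Words
variable {k X : Type*} [Field k]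

lemma mono_eq_single (u : FreeMonoid X) : mono k u = single u 1 := rfl

lemma linearIndependent_mono : LinearIndependent k (mono k : FreeMonoid X → _) :=
  (basis (FreeMonoid X) k).linearIndependent

lemma span_range_mono : Submodule.span k (Set.range (mono k : FreeMonoid X → _)) = ⊤ :=
  (basis (FreeMonoid X) k).span_eq

lemma span_mono_image (T : Set (FreeMonoid X)) :
    Submodule.span k (mono k '' T) = supported k k T :=
  (supported_eq_span_single k T).symm

lemma coeff_mono_mul_mul_mono (s : MonoidAlgebra k (FreeMonoid X)) (a v b : FreeMonoid X) :
    (mono k a * s * mono k b).coeff (a * v * b) = s.coeff v := by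
  simp [mono_eq_single]

lemma exists_eq_mul_mul_of_mem_support {s : MonoidAlgebra k (FreeMonoid X)} {a b w : FreeMonoid X}
    (hw : w ∈ (mono k a * s * mono k b).coeff.support) :
    ∃ v ∈ s.coeff.support, w = a * v * b := by
  classical
  obtain ⟨w', hw', rfl⟩ := Finset.mem_image.mp (support_coeff_mul_single_subset _ _ _ hw)
  obtain ⟨v, hv, rfl⟩ := Finset.mem_image.mp (support_coeff_single_mul_subset _ _ _ hw')
  exact ⟨v, hv, rfl⟩

end Words

section LeadingWord
variable {k X : Type*} [Field k] [LinearOrder (FreeMonoid X)]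

lemma le_lw {f : MonoidAlgebra k (FreeMonoid X)} (hf : f ≠ 0) {v : FreeMonoid X}
    (hv : v ∈ f.coeff.support) : v ≤ lw f hf :=
  Finset.le_max' _ _ hv

lemma lw_mem_support {f : MonoidAlgebra k (FreeMonoid X)} (hf : f ≠ 0) :
    lw f hf ∈ f.coeff.support :=
  Finset.max'_mem _ _

lemma mono_mul_mul_mono_sub_mem_supported_Iio
    (hmul : ∀ u v w₁ w₂ : FreeMonoid X, u < v → w₁ * u * w₂ < w₁ * v * w₂)
    {s : MonoidAlgebra k (FreeMonoid X)} (hs : s ≠ 0) (hmonic : s.coeff (lw s hs) = 1)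
    (a b : FreeMonoid X) :
    mono k a * s * mono k b - mono k (a * lw s hs * b) ∈
      supported k k (Set.Iio (a * lw s hs * b)) := by
  rw [mem_supported']
  intro w hw
  rw [Set.mem_Iio, not_lt] at hw
  rcases hw.eq_or_lt with rfl | hlt
  · rw [coeff_sub, Finsupp.sub_apply, coeff_mono_mul_mul_mono, hmonic]
    simp [mono_eq_single]
  · have hg : (mono k a * s * mono k b).coeff w = 0 := by
      by_contra hne
      obtain ⟨v, hv, rfl⟩ := exists_eq_mul_mul_of_mem_support (Finsupp.mem_support_iff.mpr hne)
      have hconj : Monotone (fun v => a * v * b) :=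
        StrictMono.monotone fun u v h => hmul u v a b h
      exact (hconj (le_lw hs hv)).not_gt hlt
    rw [coeff_sub, Finsupp.sub_apply, hg]
    simp [mono_eq_single, hlt.ne]

end LeadingWord

section Decomposition
variable {k X : Type*} [Field k] [LinearOrder (FreeMonoid X)]
  {S : Set (MonoidAlgebra k (FreeMonoid X))}

lemma disjoint_supported_irr_idSpan
    (hCD : ∀ f ∈ idSpan S, ∀ hf : f ≠ 0, lw f hf ∉ Irr S) :
    Disjoint (supported k k (Irr S)) (idSpan S) := by
  rw [Submodule.disjoint_def]
  intro f hirr hideal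
  by_contra hf
  exact hCD f hideal hf (mem_supported.mp hirr (lw_mem_support hf))

lemma idSpan_sup_supported_irr [WellFoundedLT (FreeMonoid X)]
    (hmul : ∀ u v w₁ w₂ : FreeMonoid X, u < v → w₁ * u * w₂ < w₁ * v * w₂)
    (hmonic : ∀ s ∈ S, ∀ hs : s ≠ 0, s.coeff (lw s hs) = 1) :
    idSpan S ⊔ supported k k (Irr S) = ⊤ := by
  set W := idSpan S ⊔ supported k k (Irr S)
  have hwords : ∀ u, mono k u ∈ W := by
    intro u
    induction u using WellFoundedLT.induction with
    | _ u ih =>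
    by_cases hu : u ∈ Irr S
    · refine Submodule.mem_sup_right ?_
      rw [← span_mono_image]
      exact Submodule.subset_span ⟨u, hu, rfl⟩
    · obtain ⟨a, b, s, hs, hs0, rfl⟩ := of_not_not hu
      have hsmaller : supported k k (Set.Iio (a * lw s hs0 * b)) ≤ W := by
        rw [← span_mono_image, Submodule.span_le]
        rintro _ ⟨v, hv, rfl⟩
        exact ih v hv
      have hg : mono k a * s * mono k b ∈ W :=
        Submodule.mem_sup_left (Submodule.subset_span ⟨a, b, s, hs, rfl⟩)
      simpa using W.sub_mem hg
        (hsmaller (mono_mul_mul_mono_sub_mem_supported_Iio hmul hs0 (hmonic s hs hs0) a b))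
  rw [eq_top_iff, ← span_range_mono, Submodule.span_le]
  rintro _ ⟨u, rfl⟩
  exact hwords u

end Decomposition

/-- Composition–Diamond lemma, (ii) ⇒ (iii): if every element of the two-sided ideal
generated by the monic set `S` has leading word containing some `s̄` (`s ∈ S`) as a factor,
then the `S`-irreducible words form a `k`-linear basis of `k⟨X|S⟩`. -/
theorem irr_is_basis_of_CD {k X : Type*} [Field k]
    [LinearOrder (FreeMonoid X)] [WellFoundedLT (FreeMonoid X)]
    (hmul : ∀ u v w₁ w₂ : FreeMonoid X, u < v → w₁ * u * w₂ < w₁ * v * w₂)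
    (S : Set (MonoidAlgebra k (FreeMonoid X)))
    (hS0 : ∀ s ∈ S, s ≠ 0)
    (hmonic : ∀ (s) (hs : s ∈ S), s.coeff (lw s (hS0 s hs)) = 1)
    (hCD : ∀ f ∈ idSpan S, ∀ hf : f ≠ 0, ∃ (a b : FreeMonoid X)
      (s : MonoidAlgebra k (FreeMonoid X)) (hs : s ∈ S),
        lw f hf = a * lw s (hS0 s hs) * b) :
    LinearIndependent k (fun u : Irr S =>
      Submodule.Quotient.mk (p := idSpan S) (mono k (u : FreeMonoid X))) ∧
    Submodule.span k (Set.range fun u : Irr S =>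
      Submodule.Quotient.mk (p := idSpan S) (mono k (u : FreeMonoid X))) = ⊤ := by
  have hspan : Submodule.span k (Set.range fun u : Irr S => mono k (u : FreeMonoid X)) =
      supported k k (Irr S) := by
    rw [← Set.image_eq_range, span_mono_image]
  have hdisj : Disjoint (supported k k (Irr S)) (idSpan S) :=
    disjoint_supported_irr_idSpan fun f hf hf0 hirr => by
      obtain ⟨a, b, s, hs, heq⟩ := hCD f hf hf0
      exact hirr ⟨a, b, s, hs, hS0 s hs, heq⟩
  constructor
  · refine (linearIndependent_mono.comp _ Subtype.val_injective).map (f := (idSpan S).mkQ) ?_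
    rwa [Function.comp_def, hspan, Submodule.ker_mkQ]
  · have hquot := (Submodule.map_mkQ_eq_top _ _).mpr
      (idSpan_sup_supported_irr hmul fun s hs _ => hmonic s hs)
    rwa [← hspan, Submodule.map_span, ← Set.range_comp] at hquot
end

section
/- (P. M. Cohn) Every left ideal of the free associative algebra k⟨X⟩ over a field k is a free left k⟨X⟩-module. -/
/-!
Fix a well-order on `X` and order the words shortlex: this is a well-order on the free monoid,
strictly compatible with multiplication on both sides. For a left ideal `I`, the leading words of
its nonzero elements form a set `L` closed under left multiplication; let `S` be the words of `L`
with no proper right factor in `L`. Since the right factors of a word are totally ordered by right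
divisibility, every word of `L` factors as `u * s` with a unique `s ∈ S`. Choosing a monic
`g s ∈ I` with leading word `s` for each `s ∈ S`, the products `p * g s` have pairwise distinct
leading words, which gives linear independence, and reducing leading terms shows that they span `I`.
-/

instance Additive.addLeftStrictMono {M : Type*} [Mul M] [LT M] [MulLeftStrictMono M] :
    AddLeftStrictMono (Additive M) :=
  ‹MulLeftStrictMono M›

instance Additive.addRightStrictMono {M : Type*} [Mul M] [LT M] [MulRightStrictMono M] :
    AddRightStrictMono (Additive M) :=
  ‹MulRightStrictMono M›

instance Additive.wellFoundedLT {M : Type*} [LT M] [WellFoundedLT M] :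
    WellFoundedLT (Additive M) :=
  ‹WellFoundedLT M›

theorem zero_le_of_wellFoundedLT {A : Type*} [AddMonoid A] [LinearOrder A] [WellFoundedLT A]
    [AddLeftStrictMono A] (a : A) : 0 ≤ a := by
  by_contra! ha
  refine not_strictAnti_of_wellFoundedLT (fun n : ℕ => n • a)
    (strictAnti_nat_of_succ_lt fun n => ?_)
  calc (n + 1) • a = n • a + a := succ_nsmul a n
    _ < n • a + 0 := add_lt_add_right ha _
    _ = n • a := add_zero _

theorem List.Lex.append_right_of_length_eq {α : Type*} {r : α → α → Prop} {s₁ s₂ : List α}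
    (h : List.Lex r s₁ s₂) (hl : s₁.length = s₂.length) (t : List α) :
    List.Lex r (s₁ ++ t) (s₂ ++ t) := by
  induction h with
  | nil => simp at hl
  | cons _ ih => exact .cons (ih (by simpa using hl))
  | rel h => exact .rel h

namespace FreeMonoid

variable {X : Type*}

theorem exists_mul_eq_or_of_mul_eq_mul {u s u' s' : FreeMonoid X} (h : u * s = u' * s') :
    (∃ v, s' = v * s) ∨ ∃ v, s = v * s' := by
  rcases List.append_eq_append_iff.mp h with ⟨v, -, hs⟩ | ⟨v, -, hs'⟩
  · exact .inr ⟨v, hs⟩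
  · exact .inl ⟨v, hs'⟩

variable [LinearOrder X]

abbrev shortlexOrder : LinearOrder (FreeMonoid X) :=
  LinearOrder.lift' (fun w => toLex (w.length, w.toList))
    fun _ _ h => congrArg Prod.snd (toLex.injective h)

attribute [local instance] shortlexOrder

theorem lt_iff_shortlex {u v : FreeMonoid X} :
    u < v ↔ List.Shortlex (· < ·) u.toList v.toList := by
  rw [List.shortlex_def, ← List.lt_iff_lex_lt]
  exact Prod.Lex.toLex_lt_toLex

instance [WellFoundedLT X] : WellFoundedLT (FreeMonoid X) :=
  ⟨(InvImage.wf toList (List.Shortlex.wf wellFounded_lt)).mono fun _ _ => lt_iff_shortlex.mp⟩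

instance : MulLeftStrictMono (FreeMonoid X) :=
  ⟨fun w _ _ h => lt_iff_shortlex.mpr <| by
    simpa only [toList_mul] using (lt_iff_shortlex.mp h).append_left w.toList⟩

instance : MulRightStrictMono (FreeMonoid X) :=
  ⟨fun _ _ _ h => lt_iff_shortlex.mpr <| by
    simp only [Function.swap, toList_mul]
    rcases List.shortlex_def.mp (lt_iff_shortlex.mp h) with hlen | ⟨hlen, hlex⟩
    · exact .of_length_lt (by simpa using hlen)
    · exact .of_lex (by simpa using hlen) (hlex.append_right_of_length_eq hlen _)⟩

end FreeMonoid

/-- Cohn's rigidity condition on a monoid, stated for right factors. -/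
def IsRightRigid (A : Type*) [Add A] : Prop :=
  ∀ u s u' s' : A, u + s = u' + s' → (∃ v, s' = v + s) ∨ ∃ v, s = v + s'

section RightMinimals

variable {A : Type*} [AddMonoid A]

def rightMinimals (L : Set A) : Set A :=
  {s | s ∈ L ∧ ∀ v b, b ∈ L → s = v + b → v = 0}

theorem exists_eq_add_mem_rightMinimals [LinearOrder A] [WellFoundedLT A] [AddLeftStrictMono A]
    [AddRightStrictMono A] {L : Set A} {a : A} (ha : a ∈ L) :
    ∃ u, ∃ s ∈ rightMinimals L, a = u + s := by
  induction a using WellFoundedLT.induction with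
  | _ a ih =>
    by_cases hmin : ∀ v b, b ∈ L → a = v + b → v = 0
    · exact ⟨0, a, ⟨ha, hmin⟩, (zero_add a).symm⟩
    push Not at hmin
    obtain ⟨v, b, hb, rfl, hv⟩ := hmin
    have hlt : b < v + b := lt_add_of_pos_left b ((zero_le_of_wellFoundedLT v).lt_of_ne' hv)
    obtain ⟨u, s, hs, rfl⟩ := ih b hlt hb
    exact ⟨v + u, s, hs, (add_assoc v u s).symm⟩

theorem IsRightRigid.eq_of_add_eq_add (hA : IsRightRigid A) {L : Set A} {u s u' s' : A}
    (hs : s ∈ rightMinimals L) (hs' : s' ∈ rightMinimals L) (h : u + s = u' + s') : s = s' := by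
  rcases hA u s u' s' h with ⟨v, rfl⟩ | ⟨v, rfl⟩
  · rw [hs'.2 v s hs.1 rfl, zero_add]
  · rw [hs.2 v s' hs'.1 rfl, zero_add]

end RightMinimals

namespace AddMonoidAlgebra

section LeadingTerms

variable {k A : Type*} [DivisionRing k] [AddMonoid A] [LinearOrder A] [OrderBot A]

def leadingDegrees (I : Ideal k[A]) : Set A :=
  {a | ∃ f ∈ I, f ≠ 0 ∧ f.supDegree id = a}

variable [AddLeftStrictMono A] [AddRightStrictMono A]

theorem supDegree_single_mul {u : A} {c : k} (hc : c ≠ 0) {f : k[A]} (hf : f ≠ 0) :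
    (single u c * f).supDegree id = u + f.supDegree id := by
  have hlc : (single u c).leadingCoeff id * f.leadingCoeff id ≠ 0 := by
    rw [leadingCoeff_single Function.injective_id]
    exact mul_ne_zero hc ((leadingCoeff_ne_zero Function.injective_id).mpr hf)
  rw [supDegree_mul Function.injective_id (fun _ _ => rfl) hlc (single_ne_zero.mpr hc) hf,
    supDegree_single_ne_zero u hc]
  rfl

theorem leadingCoeff_single_mul (u : A) (c : k) (f : k[A]) :
    (single u c * f).leadingCoeff id = c * f.leadingCoeff id := by
  rw [leadingCoeff_mul Function.injective_id (fun _ _ => rfl),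
    leadingCoeff_single Function.injective_id]

theorem exists_monic_mem_of_mem_leadingDegrees {I : Ideal k[A]} {a : A}
    (ha : a ∈ leadingDegrees I) : ∃ g ∈ I, g.Monic id ∧ g.supDegree id = a := by
  obtain ⟨f, hfI, hf, rfl⟩ := ha
  have hc : f.leadingCoeff id ≠ 0 := (leadingCoeff_ne_zero Function.injective_id).mpr hf
  refine ⟨single 0 (f.leadingCoeff id)⁻¹ * f, I.mul_mem_left _ hfI, ?_, ?_⟩
  · exact (leadingCoeff_single_mul _ _ _).trans (inv_mul_cancel₀ hc)
  · rw [supDegree_single_mul (inv_ne_zero hc) hf, zero_add]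

variable (I : Ideal k[A])

noncomputable def monicGenerator (s : rightMinimals (leadingDegrees I)) : I :=
  ⟨(exists_monic_mem_of_mem_leadingDegrees s.2.1).choose,
    (exists_monic_mem_of_mem_leadingDegrees s.2.1).choose_spec.1⟩

theorem monic_monicGenerator (s : rightMinimals (leadingDegrees I)) :
    (monicGenerator I s : k[A]).Monic id :=
  (exists_monic_mem_of_mem_leadingDegrees s.2.1).choose_spec.2.1

theorem supDegree_monicGenerator (s : rightMinimals (leadingDegrees I)) :
    (monicGenerator I s : k[A]).supDegree id = s :=
  (exists_monic_mem_of_mem_leadingDegrees s.2.1).choose_spec.2.2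

theorem linearIndependent_monicGenerator (hA : IsRightRigid A) :
    LinearIndependent k[A] (monicGenerator I) := by
  rw [linearIndependent_iff]
  intro l hl
  by_contra hl0
  obtain ⟨s₀, hs₀⟩ := Finsupp.support_nonempty_iff.mpr hl0
  have hsum : ∑ s ∈ l.support, l s * (monicGenerator I s : k[A]) = 0 := by
    simpa [Finsupp.linearCombination_apply, Finsupp.sum] using congrArg Subtype.val hl
  refine sum_ne_zero_of_injOn_supDegree' (D := (id : A → A)) ⟨s₀, hs₀, ?_⟩ ?_ hsum
  · rw [← leadingCoeff_ne_zero Function.injective_id,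
      (monic_monicGenerator I s₀).leadingCoeff_mul_eq_left Function.injective_id (fun _ _ => rfl),
      leadingCoeff_ne_zero Function.injective_id]
    exact Finsupp.mem_support_iff.mp hs₀
  · intro s hs t ht hst
    simp only [Function.comp_apply,
      (monic_monicGenerator I _).supDegree_mul_of_ne_zero_left Function.injective_id
        (fun _ _ => rfl) (Finsupp.mem_support_iff.mp hs),
      (monic_monicGenerator I _).supDegree_mul_of_ne_zero_left Function.injective_id
        (fun _ _ => rfl) (Finsupp.mem_support_iff.mp ht), supDegree_monicGenerator] at hst
    exact Subtype.ext (hA.eq_of_add_eq_add s.2 t.2 hst)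

theorem span_monicGenerator [WellFoundedLT A] :
    Submodule.span k[A] (Set.range (monicGenerator I)) = ⊤ := by
  refine eq_top_iff.mpr fun x _ => ?_
  suffices ∀ a, ∀ x : I, (x : k[A]).supDegree id = a →
      x ∈ Submodule.span k[A] (Set.range (monicGenerator I)) from this _ x rfl
  intro a
  induction a using WellFoundedLT.induction with
  | _ a ih =>
    intro x hx
    by_cases hx0 : x = 0
    · rw [hx0]
      exact zero_mem _
    have hx0' : (x : k[A]) ≠ 0 := by simpa using hx0
    obtain ⟨u, s, hs, hus⟩ :=
      exists_eq_add_mem_rightMinimals (L := leadingDegrees I) ⟨x, x.2, hx0', hx⟩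
    set c := (x : k[A]).leadingCoeff id
    have hc : c ≠ 0 := (leadingCoeff_ne_zero Function.injective_id).mpr hx0'
    set g := monicGenerator I ⟨s, hs⟩
    have hg : (g : k[A]).Monic id := monic_monicGenerator I ⟨s, hs⟩
    have hdeg : (x : k[A]).supDegree id = ((single u c • g : I) : k[A]).supDegree id := by
      change _ = (single u c * (g : k[A])).supDegree id
      rw [supDegree_single_mul hc hg.ne_zero, supDegree_monicGenerator, hx, hus]
    have hlc : (x : k[A]).leadingCoeff id = ((single u c • g : I) : k[A]).leadingCoeff id := by
      change _ = (single u c * (g : k[A])).leadingCoeff id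
      rw [leadingCoeff_single_mul, show (g : k[A]).leadingCoeff id = 1 from hg, mul_one]
    have hgen : single u c • g ∈ Submodule.span k[A] (Set.range (monicGenerator I)) :=
      Submodule.smul_mem _ _ (Submodule.subset_span ⟨_, rfl⟩)
    rw [← sub_add_cancel x (single u c • g)]
    refine Submodule.add_mem _ ?_ hgen
    rcases supDegree_sub_lt_of_leadingCoeff_eq Function.injective_id hdeg hlc with hlt | heq
    · exact ih _ (hx ▸ hlt) _ rfl
    · rw [Subtype.ext heq, sub_self]
      exact zero_mem _

end LeadingTerms

theorem moduleFree_ideal {k A : Type*} [DivisionRing k] [AddMonoid A] [LinearOrder A]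
    [WellFoundedLT A] [AddLeftStrictMono A] [AddRightStrictMono A] (hA : IsRightRigid A)
    (I : Ideal k[A]) : Module.Free k[A] I :=
  let _ := WellFoundedLT.toOrderBot A
  .of_basis (.mk (linearIndependent_monicGenerator I hA) (span_monicGenerator I).ge)

end AddMonoidAlgebra

attribute [local instance] RingHomInvPair.of_ringEquiv in
theorem RingEquiv.moduleFree_ideal {R S : Type*} [Semiring R] [Semiring S] (e : R ≃+* S)
    (h : ∀ J : Ideal S, Module.Free S J) (I : Ideal R) : Module.Free R I :=
  let f : R →ₛₗ[(e : R →+* S)] S := e.toSemilinearEquiv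
  have := h (I.map f)
  .of_equiv (Submodule.equivMapOfInjective f e.injective I).symm

/-- (P. M. Cohn) Every left ideal of the free associative algebra `k⟨X⟩` over a field `k`
is a free left `k⟨X⟩`-module. -/
theorem left_ideal_of_free_algebra_is_free (k X : Type*) [Field k]
    (I : Ideal (FreeAlgebra k X)) : Module.Free (FreeAlgebra k X) I := by
  obtain ⟨_, _⟩ := exists_wellFoundedLT X
  let _ : LinearOrder (FreeMonoid X) := FreeMonoid.shortlexOrder
  have hrigid : IsRightRigid (Additive (FreeMonoid X)) := fun _ _ _ _ =>
    FreeMonoid.exists_mul_eq_or_of_mul_eq_mul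
  let e : FreeAlgebra k X ≃+* AddMonoidAlgebra k (Additive (FreeMonoid X)) :=
    FreeAlgebra.equivMonoidAlgebraFreeMonoid.toRingEquiv.trans (MonoidAlgebra.toAdditive k _)
  exact e.moduleFree_ideal (AddMonoidAlgebra.moduleFree_ideal hrigid) I
end
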